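/- arXiv:0801.4397 — 7 statements merged into one kernel-verified Lean document; each statement's English description precedes it below -/
import Mathlib

section
/- Let $(X,\mu)$ be a measure space, let $V\subseteq X$ be measurable, let $I\subseteq V$ be measurable, and let $f: X^n \to \mathbb{C}$ be a symmetric function (invariant under all permutations of its arguments) that is integrable over $V^n$ with respect to the product measure. Then for any constant $\alpha \in \mathbb{C}$, $\int_{V^n} \alpha^{\sigma(z_1,\dots,z_n)} f(z_1,\dots,z_n)\, d\mu^n = \sum_{j=0}^{n} \binom{n}{j}(\alpha-1)^j \int_{I^j \times V^{n-j}} f(z_1,\dots,z_n)\, d\mu^n$, where $\sigma(z_1,\dots,z_n)$ denotes the number of indices $i$ with $z_i \in I$. -/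
/-!
Write `α = (α - 1) + 1` and expand `α ^ σ(z)` binomially over the subsets `S` of the coordinates
lying in `I`: pointwise, `α ^ σ(z) = ∑_S (α - 1) ^ |S| · 1[z_i ∈ I for all i ∈ S]`. Integrating over
`V^n` turns the `S`-th term into `(α - 1) ^ |S|` times the integral of `f` over the box with `I` on
the coordinates in `S` and `V` elsewhere. Since `f` and the product measure are invariant under
permuting coordinates, that integral only depends on `|S|`, and there are `n.choose j` sets of
size `j`.
-/

open MeasureTheory Finset

theorem MeasurableEquiv.coe_piCongrLeft_const {ι X : Type*} [MeasurableSpace X]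
    (π : Equiv.Perm ι) :
    ⇑(MeasurableEquiv.piCongrLeft (fun _ : ι => X) π) = fun z => z ∘ π.symm := by
  ext z i
  simp [MeasurableEquiv.piCongrLeft, Equiv.piCongrLeft]

section CoordinatePermutation

variable {ι X E : Type*} [Fintype ι] [MeasurableSpace X] [NormedAddCommGroup E]
  [NormedSpace ℝ E] (μ : Measure X) [SigmaFinite μ] {f : (ι → X) → E}

theorem setIntegral_univ_pi_comp_perm (hf : ∀ (π : Equiv.Perm ι) (z : ι → X), f (z ∘ π) = f z)
    (π : Equiv.Perm ι) (s : ι → Set X) :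
    ∫ z in Set.univ.pi (s ∘ π), f z ∂(Measure.pi fun _ => μ)
      = ∫ z in Set.univ.pi s, f z ∂(Measure.pi fun _ => μ) := by
  set e := MeasurableEquiv.piCongrLeft (fun _ : ι => X) π
  have he : ⇑e = fun z => z ∘ π.symm := MeasurableEquiv.coe_piCongrLeft_const π
  have hpre : e ⁻¹' Set.univ.pi s = Set.univ.pi (s ∘ π) := by
    ext z
    simp only [he, Set.mem_preimage, Set.mem_univ_pi, Function.comp_apply]
    exact ⟨fun h i => by simpa using h (π i), fun h i => by simpa using h (π.symm i)⟩
  calc ∫ z in Set.univ.pi (s ∘ π), f z ∂(Measure.pi fun _ => μ)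
      = ∫ z in e ⁻¹' Set.univ.pi s, f (e z) ∂(Measure.pi fun _ => μ) := by
        rw [hpre, he]; simp only [hf]
    _ = ∫ z in Set.univ.pi s, f z ∂(Measure.pi fun _ => μ) :=
        (measurePreserving_piCongrLeft (fun _ => μ) π).setIntegral_preimage_emb
          e.measurableEmbedding f _

theorem setIntegral_univ_pi_ite_eq_of_card_eq [DecidableEq ι]
    (hf : ∀ (π : Equiv.Perm ι) (z : ι → X), f (z ∘ π) = f z) (A B : Set X) {S T : Finset ι}
    (hST : #S = #T) :
    ∫ z in Set.univ.pi (fun i => if i ∈ S then A else B), f z ∂(Measure.pi fun _ => μ)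
      = ∫ z in Set.univ.pi (fun i => if i ∈ T then A else B), f z ∂(Measure.pi fun _ => μ) := by
  set π : Equiv.Perm ι := (equivOfCardEq hST).extendSubtype
  have hπ : ∀ i, π i ∈ T ↔ i ∈ S := fun i =>
    ⟨fun h => by_contra fun hi => (equivOfCardEq hST).extendSubtype_not_mem i hi h,
      (equivOfCardEq hST).extendSubtype_mem i⟩
  rw [← setIntegral_univ_pi_comp_perm μ hf π (fun i => if i ∈ T then A else B)]
  simp only [Function.comp_def, hπ]

end CoordinatePermutation

theorem pow_card_mem_mul_eq_sum_indicator {ι X R : Type*} [Fintype ι] [CommRing R] (A : Set X)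
    (a : R) (f : (ι → X) → R) (z : ι → X) :
    a ^ Nat.card {i // z i ∈ A} * f z
      = ∑ S : Finset ι, (a - 1) ^ #S * (Set.pi S fun _ => A).indicator f z := by
  classical
  set T : Finset ι := {i | z i ∈ A}
  have hmem : ∀ S : Finset ι, z ∈ Set.pi S (fun _ => A) ↔ S ∈ T.powerset := by
    intro S
    simp [T, Set.mem_pi, subset_iff]
  have hT : a ^ #T = ∑ S ∈ T.powerset, (a - 1) ^ #S := by
    simpa using (sum_pow_mul_eq_add_pow (a - 1) 1 T).symm
  have hcard : Nat.card {i // z i ∈ A} = #T := by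
    rw [Nat.card_eq_fintype_card, Fintype.card_subtype]
  simp only [Set.indicator_apply, hmem, mul_ite, mul_zero, sum_ite_mem, univ_inter, hcard, hT,
    sum_mul]

theorem univ_pi_inter_pi_eq_univ_pi_ite {ι X : Type*} [DecidableEq ι] {A B : Set X} (hAB : A ⊆ B)
    (S : Finset ι) :
    Set.univ.pi (fun _ => B) ∩ Set.pi S (fun _ => A)
      = Set.univ.pi (fun i : ι => if i ∈ S then A else B) := by
  ext z
  simp only [Set.mem_inter_iff, Set.mem_pi, mem_coe, Set.mem_univ, forall_const]
  constructor
  · rintro ⟨hB, hA⟩ i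
    split_ifs with hi
    exacts [hA i hi, hB i]
  · intro h
    refine ⟨fun i => ?_, fun i hi => by simpa [hi] using h i⟩
    have := h i
    split_ifs at this
    exacts [hAB this, this]

theorem setIntegral_pow_card_mem_mul_eq_sum {ι X 𝕜 : Type*} [Fintype ι] [DecidableEq ι]
    [MeasurableSpace X] [RCLike 𝕜] (μ : Measure X) [SigmaFinite μ] {V I : Set X}
    (hI : MeasurableSet I) (hIV : I ⊆ V) {f : (ι → X) → 𝕜}
    (hint : IntegrableOn f (Set.univ.pi fun _ => V) (Measure.pi fun _ => μ)) (a : 𝕜) :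
    ∫ z in Set.univ.pi (fun _ => V), a ^ Nat.card {i // z i ∈ I} * f z ∂(Measure.pi fun _ => μ)
      = ∑ S : Finset ι, (a - 1) ^ #S *
          ∫ z in Set.univ.pi (fun i => if i ∈ S then I else V), f z ∂(Measure.pi fun _ => μ) := by
  have hmeas : ∀ S : Finset ι, MeasurableSet (Set.pi (S : Set ι) fun _ => I) :=
    fun S => .pi (Set.to_countable _) fun _ _ => hI
  simp only [pow_card_mem_mul_eq_sum_indicator I a f]
  rw [integral_finsetSum _ fun S _ => (hint.indicator (hmeas S)).const_mul _]
  simp only [integral_const_mul, setIntegral_indicator (hmeas _),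
    univ_pi_inter_pi_eq_univ_pi_ite hIV]

theorem lenard_lemma_general {X : Type*} [MeasurableSpace X] (μ : Measure X) [SigmaFinite μ]
    (V I : Set X) (hI : MeasurableSet I) (hIV : I ⊆ V)
    (n : ℕ) (f : (Fin n → X) → ℂ)
    (hsym : ∀ (π : Equiv.Perm (Fin n)) (z : Fin n → X), f (z ∘ π) = f z)
    (hint : IntegrableOn f (Set.univ.pi fun _ : Fin n => V) (Measure.pi fun _ => μ))
    (α : ℂ) :
    ∫ z in Set.univ.pi (fun _ : Fin n => V),
        α ^ (Nat.card {i : Fin n // z i ∈ I}) * f z ∂(Measure.pi fun _ => μ)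
      = ∑ j ∈ Finset.range (n + 1), (n.choose j : ℂ) * (α - 1) ^ j *
          ∫ z in Set.univ.pi (fun i : Fin n => if (i : ℕ) < j then I else V),
            f z ∂(Measure.pi fun _ => μ) := by
  set g : ℕ → ℂ := fun j => (α - 1) ^ j *
    ∫ z in Set.univ.pi (fun i : Fin n => if (i : ℕ) < j then I else V), f z ∂(Measure.pi fun _ => μ)
  have hg : ∀ S : Finset (Fin n), (α - 1) ^ #S *
      ∫ z in Set.univ.pi (fun i => if i ∈ S then I else V), f z ∂(Measure.pi fun _ => μ) = g #S := by
    intro S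
    have hcard : #S = #({i : Fin n | (i : ℕ) < #S} : Finset (Fin n)) := by
      rw [Fin.card_filter_val_lt, min_eq_right (card_le_univ S |>.trans_eq (Fintype.card_fin n))]
    rw [setIntegral_univ_pi_ite_eq_of_card_eq μ hsym I V hcard]
    simp only [g, mem_filter, mem_univ, true_and]
  rw [setIntegral_pow_card_mem_mul_eq_sum μ hI hIV hint, ← powerset_univ]
  simp only [hg]
  rw [sum_powerset_apply_card, card_univ, Fintype.card_fin]
  simp only [nsmul_eq_mul, g, mul_assoc]

/-- Lemma 1 of Pâţu–Korepin–Averin: for a symmetric integrable function `f` on `V^n`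
and a constant `α`, the integral of `α^{σ(z)} f(z)` over `V^n` (where `σ(z)` counts the
coordinates lying in `I ⊆ V`) expands as a binomial sum of integrals over `I^j × V^{n-j}`. -/
theorem lenard_lemma {X : Type*} [MeasurableSpace X] (μ : Measure X) [SigmaFinite μ]
    (V I : Set X) (hV : MeasurableSet V) (hI : MeasurableSet I) (hIV : I ⊆ V)
    (n : ℕ) (f : (Fin n → X) → ℂ)
    (hsym : ∀ (π : Equiv.Perm (Fin n)) (z : Fin n → X), f (z ∘ π) = f z)
    (hint : IntegrableOn f (Set.univ.pi fun _ : Fin n => V) (Measure.pi fun _ => μ))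
    (α : ℂ) :
    ∫ z in Set.univ.pi (fun _ : Fin n => V),
        α ^ (Nat.card {i : Fin n // z i ∈ I}) * f z ∂(Measure.pi fun _ => μ)
      = ∑ j ∈ Finset.range (n + 1), (n.choose j : ℂ) * (α - 1) ^ j *
          ∫ z in Set.univ.pi (fun i : Fin n => if (i : ℕ) < j then I else V),
            f z ∂(Measure.pi fun _ => μ) :=
  lenard_lemma_general μ V I hI hIV n f hsym hint α
end

section
/- Let $\kappa \in \mathbb{R}$, let $x_1' < x_1 < x_2' < x_2 < \cdots < x_n' < x_n$ be real numbers, and set $I_- = [x_1',x_1] \cup \cdots \cup [x_n',x_n]$. Then for every real $z$ with $z \neq x_j$ and $z \neq x_j'$ for all $j$: $\prod_{j=1}^{n} e^{-i\pi\kappa\,\epsilon(z-x_j')/2}\, e^{i\pi\kappa\,\epsilon(z-x_j)/2}\, \epsilon(x_j'-z)\,\epsilon(x_j-z) = -e^{-i\pi\kappa}$ if $z \in I_-$, and $=1$ if $z \notin I_-$. -/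
private lemma factor_out (κ a b z : ℝ) (hab : a < b) (hza : z ≠ a) (hzb : z ≠ b)
    (h : z ∉ Set.Icc a b) :
    Complex.exp (-(Complex.I * Real.pi * κ * Real.sign (z - a)) / 2) *
      Complex.exp (Complex.I * Real.pi * κ * Real.sign (z - b) / 2) *
      (Real.sign (a - z) : ℂ) * (Real.sign (b - z) : ℂ) = 1 := by
  rw [Set.mem_Icc, not_and_or, not_le, not_le] at h
  rcases h with h | h
  · rw [Real.sign_of_neg (by linarith), Real.sign_of_neg (by linarith),
      Real.sign_of_pos (by linarith), Real.sign_of_pos (by linarith)]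
    push_cast
    rw [← Complex.exp_add]
    ring_nf
    exact Complex.exp_zero
  · rw [Real.sign_of_pos (by linarith), Real.sign_of_pos (by linarith),
      Real.sign_of_neg (by linarith), Real.sign_of_neg (by linarith)]
    push_cast
    rw [← Complex.exp_add]
    ring_nf
    exact Complex.exp_zero

private lemma factor_in (κ a b z : ℝ) (hza : z ≠ a) (hzb : z ≠ b)
    (h : z ∈ Set.Icc a b) :
    Complex.exp (-(Complex.I * Real.pi * κ * Real.sign (z - a)) / 2) *
      Complex.exp (Complex.I * Real.pi * κ * Real.sign (z - b) / 2) *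
      (Real.sign (a - z) : ℂ) * (Real.sign (b - z) : ℂ)
      = -Complex.exp (-(Complex.I * Real.pi * κ)) := by
  obtain ⟨h1, h2⟩ := h
  have h1' : a < z := lt_of_le_of_ne h1 (Ne.symm hza)
  have h2' : z < b := lt_of_le_of_ne h2 hzb
  rw [Real.sign_of_pos (by linarith), Real.sign_of_neg (by linarith),
    Real.sign_of_neg (by linarith), Real.sign_of_pos (by linarith)]
  push_cast
  rw [← Complex.exp_add]
  ring_nf

/-- For `x₁' < x₁ < ⋯ < xₙ' < xₙ` and `I₋ = ⋃ⱼ [xⱼ', xⱼ]`, the statistics product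
`∏ⱼ e^{-iπκ ε(z-xⱼ')/2} e^{iπκ ε(z-xⱼ)/2} ε(xⱼ'-z) ε(xⱼ-z)` equals `-e^{-iπκ}` for
`z ∈ I₋` and `1` for `z ∉ I₋`, whenever `z` differs from all endpoints. -/
theorem statistics_product_minus (κ : ℝ) (n : ℕ) (hn : 1 ≤ n) (x x' : Fin n → ℝ)
    (hx'x : ∀ j, x' j < x j) (hchain : ∀ j k : Fin n, j < k → x j < x' k)
    (z : ℝ) (hz : ∀ j, z ≠ x j ∧ z ≠ x' j) :
    (z ∈ ⋃ j, Set.Icc (x' j) (x j) →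
      ∏ j : Fin n,
        Complex.exp (-(Complex.I * Real.pi * κ * Real.sign (z - x' j)) / 2) *
          Complex.exp (Complex.I * Real.pi * κ * Real.sign (z - x j) / 2) *
          (Real.sign (x' j - z) : ℂ) * (Real.sign (x j - z) : ℂ)
        = -Complex.exp (-(Complex.I * Real.pi * κ))) ∧
    (z ∉ ⋃ j, Set.Icc (x' j) (x j) →
      ∏ j : Fin n,
        Complex.exp (-(Complex.I * Real.pi * κ * Real.sign (z - x' j)) / 2) *
          Complex.exp (Complex.I * Real.pi * κ * Real.sign (z - x j) / 2) *
          (Real.sign (x' j - z) : ℂ) * (Real.sign (x j - z) : ℂ)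
        = 1) := by
  constructor
  · intro hmem
    rw [Set.mem_iUnion] at hmem
    obtain ⟨j, hj⟩ := hmem
    rw [Finset.prod_eq_single j]
    · exact factor_in κ _ _ z (hz j).2 (hz j).1 hj
    · intro k _ hkj
      apply factor_out κ _ _ z (hx'x k) (hz k).2 (hz k).1
      intro hk
      rcases lt_or_gt_of_ne hkj with hlt | hlt
      · have := hchain k j hlt
        have := hj.1
        have := hk.2
        linarith
      · have := hchain j k hlt
        have := hj.2
        have := hk.1
        linarith
    · intro h; exact absurd (Finset.mem_univ j) h
  · intro hmem
    rw [Set.mem_iUnion] at hmem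
    push_neg at hmem
    apply Finset.prod_eq_one
    intro j _
    exact factor_out κ _ _ z (hx'x j) (hz j).2 (hz j).1 (hmem j)
end

section
/- (Boundary conditions under the Anyon–Fermi mapping.) Let $\kappa, \phi \in \mathbb{R}$, $L > 0$, and let $\chi^f: [0,L]^N \to \mathbb{C}$ be totally antisymmetric and satisfy in its first argument $\chi^f(0, z_2, \dots, z_N) = (-1)^{N-1} e^{-i\phi}\, \chi^f(L, z_2, \dots, z_N)$ for all $z_2,\dots,z_N \in (0,L)$. Let $\chi^a = A_\kappa\, B\, \chi^f$ and set $\overline\phi = \phi + \pi\kappa(N-1)$. Then for each $1 \le k \le N$ and all pairwise distinct $z_1,\dots,z_{k-1},z_{k+1},\dots,z_N \in (0,L)$: $\chi^a(z_1,\dots,z_{k-1}, 0, z_{k+1},\dots,z_N) = e^{i(2(k-1)\pi\kappa - \overline\phi)}\, \chi^a(z_1,\dots,z_{k-1}, L, z_{k+1},\dots,z_N)$. -/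
/-!
Moving the `k`-th particle from `L` to `0`, with the others inside `(0, L)`, reverses exactly the
signs `ε(z_k - z_m)`, `m ≠ k`. In the phase of `A_κ` the `k` pairs with `m < k` gain `+2` and the
`N - 1 - k` pairs with `m > k` gain `-2`, so `A_κ` picks up `e^{iπκ(2k - (N - 1))}`, while `B`
picks up `(-1)^(N - 1)`. The fermionic condition is moved from the first argument to the `k`-th by
the transposition of the two, whose sign appears on both sides; the two factors `(-1)^(N - 1)`
then cancel.
-/

/-- The statistics factor `A_κ(z₁,…,z_N) = exp(iπκ ∑_{j<k} ε(z_j - z_k)/2)`. -/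
noncomputable def Afac (κ : ℝ) {N : ℕ} (z : Fin N → ℝ) : ℂ :=
  Complex.exp (Complex.I * Real.pi * κ *
    (∑ j : Fin N, ∑ k ∈ Finset.univ.filter (fun k => j < k), Real.sign (z j - z k)) / 2)

/-- The statistics factor `B(z₁,…,z_N) = ∏_{j>k} ε(z_j - z_k)`. -/
noncomputable def Bfac {N : ℕ} (z : Fin N → ℝ) : ℝ :=
  ∏ j : Fin N, ∏ k ∈ Finset.univ.filter (fun k => k < j), Real.sign (z j - z k)

open Finset Function

@[to_additive]
theorem Fin.prod_prod_filter_lt_ite_eq {M : Type*} [CommMonoid M] {N : ℕ} (k : Fin N) (a b : M) :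
    ∏ j : Fin N, ∏ m ∈ univ.filter (fun m => j < m), (if m = k then a else if j = k then b else 1)
      = a ^ (k : ℕ) * b ^ (N - 1 - k) := by
  have split : ∀ j m : Fin N, j < m →
      (if m = k then a else if j = k then b else 1)
        = (if m = k then a else 1) * (if j = k then b else 1) := by
    intro j m hjm
    by_cases hm : m = k
    · subst hm; simp [hjm.ne]
    · simp [hm]
  rw [prod_congr rfl fun j _ => prod_congr rfl fun m hm => split j m (mem_filter.mp hm).2]
  simp only [prod_mul_distrib, prod_ite_eq', prod_ite_irrel, prod_const_one]
  simp [prod_ite, filter_gt_eq_Iio, filter_lt_eq_Ioi, Fin.card_Iio, Fin.card_Ioi]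

section UpdateSigns

variable {N : ℕ} {z : Fin N → ℝ} {k j m : Fin N} {a b : ℝ}

theorem sign_sub_update_of_forall_lt (hz : ∀ i, i ≠ k → a < z i) (hjm : j ≠ m) :
    Real.sign (update z k a j - update z k a m)
      = if m = k then 1 else if j = k then -1 else Real.sign (z j - z m) := by
  by_cases hm : m = k
  · subst hm; simp [hjm, Real.sign_of_pos (sub_pos.mpr (hz j hjm))]
  · by_cases hj : j = k
    · subst hj; simp [hm, Real.sign_of_neg (sub_neg.mpr (hz m (Ne.symm hjm)))]
    · simp [hm, hj]

theorem sign_sub_update_of_forall_gt (hz : ∀ i, i ≠ k → z i < b) (hjm : j ≠ m) :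
    Real.sign (update z k b j - update z k b m)
      = if m = k then -1 else if j = k then 1 else Real.sign (z j - z m) := by
  by_cases hm : m = k
  · subst hm; simp [hjm, Real.sign_of_neg (sub_neg.mpr (hz j hjm))]
  · by_cases hj : j = k
    · subst hj; simp [hm, Real.sign_of_pos (sub_pos.mpr (hz m (Ne.symm hjm)))]
    · simp [hm, hj]

theorem sign_sub_update_eq_add_of_mem_Ioo (hz : ∀ i, i ≠ k → z i ∈ Set.Ioo a b) (hjm : j ≠ m) :
    Real.sign (update z k a j - update z k a m)
      = Real.sign (update z k b j - update z k b m)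
        + if m = k then 2 else if j = k then -2 else 0 := by
  rw [sign_sub_update_of_forall_lt (fun i hi => (hz i hi).1) hjm,
    sign_sub_update_of_forall_gt (fun i hi => (hz i hi).2) hjm]
  split_ifs <;> norm_num

theorem sign_sub_update_eq_mul_of_mem_Ioo (hz : ∀ i, i ≠ k → z i ∈ Set.Ioo a b) (hjm : j ≠ m) :
    Real.sign (update z k a j - update z k a m)
      = (if j = k then -1 else if m = k then -1 else 1)
        * Real.sign (update z k b j - update z k b m) := by
  rw [sign_sub_update_of_forall_lt (fun i hi => (hz i hi).1) hjm,
    sign_sub_update_of_forall_gt (fun i hi => (hz i hi).2) hjm]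
  split_ifs <;> simp_all

theorem sum_sign_sub_update_eq_add_of_mem_Ioo (hz : ∀ i, i ≠ k → z i ∈ Set.Ioo a b) :
    ∑ j : Fin N, ∑ m ∈ univ.filter (fun m => j < m), Real.sign (update z k a j - update z k a m)
      = ∑ j : Fin N, ∑ m ∈ univ.filter (fun m => j < m),
          Real.sign (update z k b j - update z k b m)
        + 2 * (2 * k - (N - 1)) := by
  rw [sum_congr rfl fun j _ => sum_congr rfl fun m hm =>
      sign_sub_update_eq_add_of_mem_Ioo hz (mem_filter.mp hm).2.ne,
    sum_congr rfl fun j _ => sum_add_distrib, sum_add_distrib, Fin.sum_sum_filter_lt_ite_eq]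
  have hk : (k : ℕ) ≤ N - 1 := Nat.le_sub_one_of_lt k.is_lt
  have hN : 1 ≤ N := k.pos
  simp only [nsmul_eq_mul, Nat.cast_sub hk, Nat.cast_sub hN]
  ring

theorem Afac_update_eq_mul_of_mem_Ioo (κ : ℝ) (hz : ∀ i, i ≠ k → z i ∈ Set.Ioo a b) :
    Afac κ (update z k a)
      = Complex.exp (Complex.I * Real.pi * κ * (2 * k - (N - 1))) * Afac κ (update z k b) := by
  rw [Afac, Afac, sum_sign_sub_update_eq_add_of_mem_Ioo hz, ← Complex.exp_add]
  congr 1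
  push_cast
  ring

theorem Bfac_update_eq_mul_of_mem_Ioo (hz : ∀ i, i ≠ k → z i ∈ Set.Ioo a b) :
    Bfac (update z k a) = (-1) ^ (N - 1) * Bfac (update z k b) := by
  have hswap : ∀ w : Fin N → ℝ, Bfac w
      = ∏ m : Fin N, ∏ j ∈ univ.filter (fun j => m < j), Real.sign (w j - w m) :=
    fun w => prod_comm' (by simp)
  rw [hswap, hswap, prod_congr rfl fun m _ => prod_congr rfl fun j hj =>
      sign_sub_update_eq_mul_of_mem_Ioo hz (mem_filter.mp hj).2.ne',
    prod_congr rfl fun m _ => prod_mul_distrib, prod_mul_distrib,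
    Fin.prod_prod_filter_lt_ite_eq, ← pow_add]
  congr 2
  have := k.is_lt
  omega

end UpdateSigns

theorem apply_update_eq_mul_of_antisymm {N : ℕ} {χ : (Fin N → ℝ) → ℂ}
    (hanti : ∀ (π : Equiv.Perm (Fin N)) (z : Fin N → ℝ),
      χ (z ∘ π) = ((Equiv.Perm.sign π : ℤ) : ℂ) * χ z)
    {S : Set ℝ} {a b : ℝ} {c : ℂ} {i : Fin N}
    (hbc : ∀ z : Fin N → ℝ, (∀ j, j ≠ i → z j ∈ S) →
      χ (update z i a) = c * χ (update z i b))
    (k : Fin N) {z : Fin N → ℝ} (hz : ∀ j, j ≠ k → z j ∈ S) :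
    χ (update z k a) = c * χ (update z k b) := by
  set σ := Equiv.swap i k
  have hσ : σ.symm k = i := by simp [σ]
  have hbcσ := hbc (z ∘ σ) fun j hj => hz (σ j) fun h => hj (by simpa [σ] using congrArg σ h)
  rw [← hσ, ← update_comp_equiv, ← update_comp_equiv, hanti, hanti] at hbcσ
  have hsign : ((Equiv.Perm.sign σ : ℤ) : ℂ) ≠ 0 := Int.cast_ne_zero.mpr (Units.ne_zero _)
  exact mul_left_cancel₀ hsign (by rw [hbcσ]; ring)

theorem anyon_fermi_boundary_conditions_general (κ φ L : ℝ) (N : ℕ) (hN : 0 < N)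
    (χf : (Fin N → ℝ) → ℂ)
    (hanti : ∀ (π : Equiv.Perm (Fin N)) (z : Fin N → ℝ),
      χf (z ∘ π) = ((Equiv.Perm.sign π : ℤ) : ℂ) * χf z)
    (hbc : ∀ z : Fin N → ℝ, (∀ i : Fin N, i ≠ ⟨0, hN⟩ → z i ∈ Set.Ioo 0 L) →
      χf (Function.update z ⟨0, hN⟩ 0)
        = (-1) ^ (N - 1) * Complex.exp (-(Complex.I * φ)) *
            χf (Function.update z ⟨0, hN⟩ L))
    (k : Fin N) (z : Fin N → ℝ)
    (hz : ∀ i, i ≠ k → z i ∈ Set.Ioo 0 L) :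
    Afac κ (Function.update z k 0) * (Bfac (Function.update z k 0) : ℂ) *
        χf (Function.update z k 0)
      = Complex.exp (Complex.I *
            (2 * (k : ℕ) * Real.pi * κ - ((φ : ℂ) + Real.pi * κ * ((N : ℂ) - 1)))) *
          (Afac κ (Function.update z k L) * (Bfac (Function.update z k L) : ℂ) *
            χf (Function.update z k L)) := by
  have hphase : Complex.exp (Complex.I *
        (2 * (k : ℕ) * Real.pi * κ - ((φ : ℂ) + Real.pi * κ * ((N : ℂ) - 1))))
      = Complex.exp (Complex.I * Real.pi * κ * (2 * k - (N - 1)))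
        * Complex.exp (-(Complex.I * φ)) := by
    rw [← Complex.exp_add]
    congr 1
    ring
  have hsq : (-1 : ℂ) ^ (N - 1) * (-1) ^ (N - 1) = 1 := by rw [← mul_pow]; norm_num
  rw [Afac_update_eq_mul_of_mem_Ioo κ hz, Bfac_update_eq_mul_of_mem_Ioo hz,
    apply_update_eq_mul_of_antisymm hanti hbc k hz, hphase]
  push_cast
  linear_combination (Complex.exp (Complex.I * Real.pi * κ * (2 * k - (N - 1)))
      * Complex.exp (-(Complex.I * φ)) * Afac κ (update z k L) * Bfac (update z k L)
      * χf (update z k L)) * hsq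

/-- Boundary conditions under the Anyon–Fermi mapping: if the totally antisymmetric `χᶠ`
satisfies `χᶠ(0,…) = (-1)^{N-1} e^{-iφ} χᶠ(L,…)` in its first argument, then
`χᵃ = A_κ B χᶠ` satisfies, in its `k`-th argument (0-indexed `k`),
`χᵃ(…,0,…) = e^{i(2kπκ - φ̄)} χᵃ(…,L,…)` with `φ̄ = φ + πκ(N-1)`. -/
theorem anyon_fermi_boundary_conditions (κ φ L : ℝ) (hL : 0 < L) (N : ℕ) (hN : 0 < N)
    (χf : (Fin N → ℝ) → ℂ)
    (hanti : ∀ (π : Equiv.Perm (Fin N)) (z : Fin N → ℝ),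
      χf (z ∘ π) = ((Equiv.Perm.sign π : ℤ) : ℂ) * χf z)
    (hbc : ∀ z : Fin N → ℝ, (∀ i : Fin N, i ≠ ⟨0, hN⟩ → z i ∈ Set.Ioo 0 L) →
      χf (Function.update z ⟨0, hN⟩ 0)
        = (-1) ^ (N - 1) * Complex.exp (-(Complex.I * φ)) *
            χf (Function.update z ⟨0, hN⟩ L))
    (k : Fin N) (z : Fin N → ℝ)
    (hz : ∀ i, i ≠ k → z i ∈ Set.Ioo 0 L)
    (hdist : ∀ i j, i ≠ k → j ≠ k → i ≠ j → z i ≠ z j) :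
    Afac κ (Function.update z k 0) * (Bfac (Function.update z k 0) : ℂ) *
        χf (Function.update z k 0)
      = Complex.exp (Complex.I *
            (2 * (k : ℕ) * Real.pi * κ - ((φ : ℂ) + Real.pi * κ * ((N : ℂ) - 1)))) *
          (Afac κ (Function.update z k L) * (Bfac (Function.update z k L) : ℂ) *
            χf (Function.update z k L)) :=
  anyon_fermi_boundary_conditions_general κ φ L N hN χf hanti hbc k z hz
end

section
/- (Boundary conditions under the Anyon–Bose mapping.) Let $\kappa, \phi \in \mathbb{R}$, $L > 0$, and let $\chi^b: [0,L]^N \to \mathbb{C}$ be totally symmetric and satisfy in its first argument $\chi^b(0, z_2, \dots, z_N) = e^{-i\phi}\, \chi^b(L, z_2, \dots, z_N)$ for all $z_2,\dots,z_N \in (0,L)$. Let $\chi^a = A_\kappa\, \chi^b$ and set $\overline\phi = \phi + \pi\kappa(N-1)$. Then for each $1 \le k \le N$ and all $z_1,\dots,z_{k-1},z_{k+1},\dots,z_N \in (0,L)$: $\chi^a(z_1,\dots,z_{k-1}, 0, z_{k+1},\dots,z_N) = e^{i(2(k-1)\pi\kappa - \overline\phi)}\, \chi^a(z_1,\dots,z_{k-1},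 L, z_{k+1},\dots,z_N)$. -/
/-- Boundary conditions under the Anyon–Bose mapping: if the totally symmetric `χᵇ`
satisfies `χᵇ(0,…) = e^{-iφ} χᵇ(L,…)` in its first argument, then `χᵃ = A_κ χᵇ`
satisfies, in its `k`-th argument (0-indexed `k`),
`χᵃ(…,0,…) = e^{i(2kπκ - φ̄)} χᵃ(…,L,…)` with `φ̄ = φ + πκ(N-1)`. -/
theorem anyon_bose_boundary_conditions (κ φ L : ℝ) (hL : 0 < L) (N : ℕ) (hN : 0 < N)
    (χb : (Fin N → ℝ) → ℂ)
    (hsym : ∀ (π : Equiv.Perm (Fin N)) (z : Fin N → ℝ), χb (z ∘ π) = χb z)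
    (hbc : ∀ z : Fin N → ℝ, (∀ i : Fin N, i ≠ ⟨0, hN⟩ → z i ∈ Set.Ioo 0 L) →
      χb (Function.update z ⟨0, hN⟩ 0)
        = Complex.exp (-(Complex.I * φ)) * χb (Function.update z ⟨0, hN⟩ L))
    (k : Fin N) (z : Fin N → ℝ)
    (hz : ∀ i, i ≠ k → z i ∈ Set.Ioo 0 L) :
    Afac κ (Function.update z k 0) * χb (Function.update z k 0)
      = Complex.exp (Complex.I *
            (2 * (k : ℕ) * Real.pi * κ - ((φ : ℂ) + Real.pi * κ * ((N : ℂ) - 1)))) *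
          (Afac κ (Function.update z k L) * χb (Function.update z k L)) := by
  classical
  set k0 : Fin N := ⟨0, hN⟩ with hk0
  set σ : Equiv.Perm (Fin N) := Equiv.swap k0 k with hσ
  set u := Function.update z k (0:ℝ) with hu
  set v := Function.update z k L with hv
  have hσk0 : σ k0 = k := Equiv.swap_apply_left _ _
  have hcomp : ∀ a : ℝ, (Function.update z k a) ∘ σ = Function.update (z ∘ σ) k0 a := by
    intro a; funext i
    by_cases h : i = k0
    · subst h; show Function.update z k a (σ k0) = a; rw [hσk0, Function.update_self]
    · have h2 : σ i ≠ k := fun hc => h (σ.injective (by rw [hc, hσk0]))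
      simp [Function.comp, Function.update_of_ne h2, Function.update_of_ne h]
  have hw : ∀ i : Fin N, i ≠ k0 → (z ∘ σ) i ∈ Set.Ioo 0 L := by
    intro i hi
    have h2 : σ i ≠ k := fun hc => hi (σ.injective (by rw [hc, hσk0]))
    exact hz _ h2
  have hχ : χb u = Complex.exp (-(Complex.I * φ)) * χb v := by
    have e0 : χb u = χb (Function.update (z ∘ σ) k0 0) := by
      rw [← hsym σ u, hu, hcomp]
    have eL : χb v = χb (Function.update (z ∘ σ) k0 L) := by
      rw [← hsym σ v, hv, hcomp]
    rw [e0, eL]; exact hbc (z ∘ σ) hw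
  -- exponent computation
  have key : ∀ j m : Fin N, j < m → Real.sign (u j - u m) - Real.sign (v j - v m)
      = if j = k then (-2:ℝ) else if m = k then 2 else 0 := by
    intro j m hjm
    by_cases hj : j = k
    · subst hj
      have hm : m ≠ j := (ne_of_gt hjm)
      have hzm := hz m hm
      rw [if_pos rfl, hu, hv]
      simp only [Function.update_self, Function.update_of_ne hm]
      rw [Real.sign_of_neg (by linarith [hzm.1]), Real.sign_of_pos (by linarith [hzm.2])]
      norm_num
    · by_cases hm : m = k
      · subst hm
        have hzj := hz j hj
        rw [if_neg hj, if_pos rfl, hu, hv]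
        simp only [Function.update_self, Function.update_of_ne hj]
        rw [Real.sign_of_pos (by linarith [hzj.1]), Real.sign_of_neg (by linarith [hzj.2])]
        norm_num
      · rw [if_neg hj, if_neg hm, hu, hv]
        simp only [Function.update_of_ne hj, Function.update_of_ne hm]
        ring
  have hk' : k.val ≤ N - 1 := Nat.le_sub_one_of_lt k.isLt
  have hcast1 : ((N - 1 - k.val : ℕ) : ℝ) = (N:ℝ) - 1 - (k.val:ℝ) := by
    rw [Nat.cast_sub hk', Nat.cast_sub hN]; norm_num
  have hS : (∑ j : Fin N, ∑ m ∈ Finset.univ.filter (fun m => j < m), Real.sign (u j - u m))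
      - (∑ j : Fin N, ∑ m ∈ Finset.univ.filter (fun m => j < m), Real.sign (v j - v m))
      = 4 * (k.val : ℝ) - 2 * ((N:ℝ) - 1) := by
    rw [← Finset.sum_sub_distrib]
    simp_rw [← Finset.sum_sub_distrib]
    have step1 : ∀ j : Fin N,
        (∑ m ∈ Finset.univ.filter (fun m => j < m),
          (Real.sign (u j - u m) - Real.sign (v j - v m)))
        = (if j = k then (-2:ℝ) * ((N:ℝ) - 1 - (k.val:ℝ)) else 0)
          + (if j < k then (2:ℝ) else 0) := by
      intro j
      rw [Finset.sum_congr rfl (fun m hm => key j m (by simpa using hm))]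
      by_cases hj : j = k
      · subst hj
        have hbody : ∀ m ∈ Finset.univ.filter (fun m => j < m),
            (if j = j then (-2:ℝ) else if m = j then 2 else 0) = -2 := fun m _ => by simp
        rw [Finset.sum_congr rfl hbody, Finset.sum_const]
        have hcard : (Finset.univ.filter (fun m => j < m) : Finset (Fin N)).card
            = N - 1 - j.val := by
          have he : (Finset.univ.filter (fun m => j < m) : Finset (Fin N)) = Finset.Ioi j := by
            ext m; simp
          rw [he, Fin.card_Ioi]
        rw [hcard, if_pos rfl, if_neg (lt_irrefl j), nsmul_eq_mul, hcast1]
        ring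
      · simp only [if_neg hj]
        rw [Finset.sum_ite_eq' (Finset.univ.filter (fun m => j < m)) k (fun _ => (2:ℝ))]
        simp
    rw [Finset.sum_congr rfl (fun j _ => step1 j), Finset.sum_add_distrib]
    rw [Finset.sum_ite_eq' Finset.univ k (fun _ => (-2:ℝ) * ((N:ℝ) - 1 - (k.val:ℝ)))]
    rw [if_pos (Finset.mem_univ k)]
    have h2 : (∑ j : Fin N, (if j < k then (2:ℝ) else 0)) = 2 * (k.val : ℝ) := by
      rw [← Finset.sum_filter]
      rw [Finset.sum_const]
      have he : (Finset.univ.filter (fun j => j < k) : Finset (Fin N)) = Finset.Iio k := by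
        ext m; simp
      rw [he, Fin.card_Iio, nsmul_eq_mul]
      ring
    rw [h2]; ring
  have hA : Afac κ u
      = Complex.exp (Complex.I * (2 * (k.val:ℂ) * Real.pi * κ - Real.pi * κ * ((N:ℂ) - 1)))
        * Afac κ v := by
    unfold Afac
    rw [← Complex.exp_add]
    congr 1
    have hSc := congrArg (fun x : ℝ => (x : ℂ)) hS
    push_cast at hSc
    have : ((∑ j : Fin N, ∑ m ∈ Finset.univ.filter (fun m => j < m),
        Real.sign (u j - u m) : ℝ) : ℂ)
        = ((∑ j : Fin N, ∑ m ∈ Finset.univ.filter (fun m => j < m),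
        Real.sign (v j - v m) : ℝ) : ℂ) + (4 * (k.val:ℂ) - 2 * ((N:ℂ) - 1)) := by
      rw [← sub_eq_iff_eq_add']
      push_cast
      rw [← hSc]
    push_cast
    push_cast at this
    rw [this]
    ring
  calc Afac κ u * χb u
      = (Complex.exp (Complex.I * (2 * (k.val:ℂ) * Real.pi * κ - Real.pi * κ * ((N:ℂ) - 1)))
          * Complex.exp (-(Complex.I * φ))) * (Afac κ v * χb v) := by
        rw [hχ, hA]; ring
    _ = Complex.exp (Complex.I *
            (2 * (k : ℕ) * Real.pi * κ - ((φ : ℂ) + Real.pi * κ * ((N : ℂ) - 1)))) *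
          (Afac κ v * χb v) := by
        rw [← Complex.exp_add]; congr 1; push_cast; try ring
end

section
/- (Anyon–Fermi expansion of the reduced density matrix, ordering $O_-$.) Let $\kappa \in \mathbb{R}$, $L>0$, $V = [-L/2, L/2]$, $N \ge n \ge 1$, and let $\chi: \mathbb{R}^N \to \mathbb{C}$ be continuous and totally antisymmetric. Let $x_1' < x_1 < \cdots < x_n' < x_n$ be points of $V$ and set $I_- = [x_1',x_1] \cup \cdots \cup [x_n',x_n]$. Define $\chi^a = A_\kappa\, B\, \chi$ and the statistics constant $C_- = A_{-\kappa}(x_1',\dots,x_n')\, B(x_1',\dots,x_n')\, A_\kappa(x_1,\dots,x_n)\, B(x_1,\dots,x_n)$. Then $\int_{V^{N-n}} \overline{\chi^a(z_1,\dots,z_{N-n}, x_1',\dots,x_n')}\, \chi^a(z_1,\dots,z_{N-n}, x_1,\dots,x_n)\, dz = C_- \sum_{j=0}^{N-n} (-1)^j (1 + e^{-i\pi\kappa})^j \binom{N-n}{j} \int_{I_-^{\,j}} dw \int_{V^{N-n-j}} dz\, \overline{\chi(w_1,\dots,w_j, z_1,\dots,z_{N-n-j}, x_1',\dots,x_n')}\,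 \chi(w_1,\dots,w_j, z_1,\dots,z_{N-n-j}, x_1,\dots,x_n)$. -/
open MeasureTheory

/-!
Off a null set the free coordinates `z` are pairwise distinct and avoid the `xₗ, xₗ'`. There the
statistics factors of `χᵃ(z, x')` and `χᵃ(z, x)` combine into `C₋ ∏ᵢ φ(zᵢ)`: the factors among
the `zᵢ` alone cancel (`|A_κ| = 1`, `B² = 1`), and a particle at `t` sees each pair `xₗ' < xₗ`
only through `pairPhase`, which is `1` unless `t` lies between them and `-e^{-iπκ}` if it does.
By the ordering `O₋` this gives `φ = 1 - (1 + e^{-iπκ}) 1_{I₋}`. Expanding `∏ᵢ φ(zᵢ)` over the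
subsets `S` of free particles, the `S`-term integrates `conj χ(z, x') χ(z, x)` over the box where
the coordinates in `S` are confined to `I₋`. That integrand is symmetric in `z` (the two factors
`sgn π` cancel), so the term depends only on `|S|`, which produces the binomial coefficients.
-/

lemma Fin.castAdd_lt_natAdd {m n : ℕ} (i : Fin m) (l : Fin n) :
    Fin.castAdd n i < Fin.natAdd m l := by
  simp only [Fin.lt_def, Fin.val_castAdd, Fin.val_natAdd]
  omega

lemma sum_sign_append {m n : ℕ} (z : Fin m → ℝ) (y : Fin n → ℝ) :
    (∑ j : Fin (m + n), ∑ k ∈ Finset.univ.filter (fun k => j < k),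
        Real.sign (Fin.append z y j - Fin.append z y k))
    = (∑ j : Fin m, ∑ k ∈ Finset.univ.filter (fun k => j < k), Real.sign (z j - z k))
    + (∑ j : Fin n, ∑ k ∈ Finset.univ.filter (fun k => j < k), Real.sign (y j - y k))
    + ∑ i : Fin m, ∑ l : Fin n, Real.sign (z i - y l) := by
  simp only [Finset.sum_filter, Fin.sum_univ_add, Fin.append_left, Fin.append_right,
    (Fin.strictMono_castAdd n).lt_iff_lt, (Fin.strictMono_natAdd m).lt_iff_lt,
    Fin.castAdd_lt_natAdd, (Fin.castAdd_lt_natAdd _ _).not_gt, if_true, if_false,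
    Finset.sum_const_zero, add_zero, Finset.sum_add_distrib]
  ring

lemma prod_sign_append {m n : ℕ} (z : Fin m → ℝ) (y : Fin n → ℝ) :
    (∏ j : Fin (m + n), ∏ k ∈ Finset.univ.filter (fun k => k < j),
        Real.sign (Fin.append z y j - Fin.append z y k))
    = (∏ j : Fin m, ∏ k ∈ Finset.univ.filter (fun k => k < j), Real.sign (z j - z k))
    * (∏ j : Fin n, ∏ k ∈ Finset.univ.filter (fun k => k < j), Real.sign (y j - y k))
    * ∏ i : Fin m, ∏ l : Fin n, Real.sign (y l - z i) := by
  simp only [Finset.prod_filter, Fin.prod_univ_add, Fin.append_left, Fin.append_right,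
    (Fin.strictMono_castAdd n).lt_iff_lt, (Fin.strictMono_natAdd m).lt_iff_lt,
    Fin.castAdd_lt_natAdd, (Fin.castAdd_lt_natAdd _ _).not_gt, if_true, if_false,
    Finset.prod_const_one, Finset.prod_mul_distrib]
  rw [Finset.prod_comm (s := Finset.univ (α := Fin n))]
  ring

lemma conj_Afac_append_mul_Afac_append (κ : ℝ) {m n : ℕ} (z : Fin m → ℝ) (x x' : Fin n → ℝ) :
    starRingEnd ℂ (Afac κ (Fin.append z x')) * Afac κ (Fin.append z x)
      = Afac (-κ) x' * Afac κ x * ∏ i, ∏ l, Complex.exp (Complex.I * Real.pi * κ *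
          ((Real.sign (z i - x l) - Real.sign (z i - x' l) : ℝ) : ℂ) / 2) := by
  simp only [Afac, ← Complex.exp_conj, ← Complex.exp_sum, ← Complex.exp_add, sum_sign_append]
  congr 1
  simp only [map_mul, map_div₀, Complex.conj_I, Complex.conj_ofReal, map_ofNat]
  push_cast
  simp only [mul_sub, sub_div, Finset.sum_sub_distrib, ← Finset.sum_div, ← Finset.mul_sum]
  ring

lemma Bfac_mul_self {m : ℕ} {z : Fin m → ℝ} (hz : Function.Injective z) :
    Bfac z * Bfac z = 1 := by
  simp only [Bfac, ← Finset.prod_mul_distrib]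
  refine Finset.prod_eq_one fun j _ => Finset.prod_eq_one fun k hk => ?_
  have hkj : z j - z k ≠ 0 := sub_ne_zero.2 (hz.ne (Finset.mem_filter.1 hk).2.ne')
  rcases Real.sign_apply_eq_of_ne_zero _ hkj with h | h <;> simp [h]

lemma Bfac_append {m n : ℕ} (z : Fin m → ℝ) (y : Fin n → ℝ) :
    Bfac (Fin.append z y) = Bfac z * Bfac y * ∏ i, ∏ l, Real.sign (y l - z i) :=
  prod_sign_append z y

lemma Bfac_append_mul_Bfac_append {m n : ℕ} {z : Fin m → ℝ} (hz : Function.Injective z)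
    (x x' : Fin n → ℝ) :
    Bfac (Fin.append z x') * Bfac (Fin.append z x)
      = Bfac x' * Bfac x * ∏ i, ∏ l, Real.sign (x' l - z i) * Real.sign (x l - z i) := by
  have := Bfac_mul_self hz
  simp only [Bfac_append, Finset.prod_mul_distrib]
  grind

lemma volume_setOf_apply_eq_apply {ι : Type*} [Fintype ι] {i j : ι} (hij : i ≠ j) :
    volume {z : ι → ℝ | z i = z j} = 0 := by
  classical
  let f : (ι → ℝ) →ₗ[ℝ] ℝ := (LinearMap.proj i : (ι → ℝ) →ₗ[ℝ] ℝ) - LinearMap.proj j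
  have hset : {z : ι → ℝ | z i = z j} = (LinearMap.ker f : Set (ι → ℝ)) := by
    ext z
    simp [f, sub_eq_zero]
  rw [hset]
  refine Measure.addHaar_submodule _ _ fun htop => ?_
  have hsingle : Pi.single i (1 : ℝ) ∈ LinearMap.ker f := htop ▸ Submodule.mem_top
  simp [f, Pi.single_eq_of_ne hij.symm] at hsingle

lemma ae_injective {ι : Type*} [Fintype ι] : ∀ᵐ z : ι → ℝ, Function.Injective z := by
  have hne : ∀ᵐ z : ι → ℝ, ∀ i j, i ≠ j → z i ≠ z j := by
    refine ae_all_iff.2 fun i => ae_all_iff.2 fun j => ?_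
    by_cases hij : i = j
    · exact ae_of_all _ fun _ h => absurd hij h
    · filter_upwards [measure_eq_zero_iff_ae_notMem.1 (volume_setOf_apply_eq_apply hij)]
        with z hz _ using hz
  filter_upwards [hne] with z hz i j hij
  by_contra h
  exact hz i j h hij

lemma ae_forall_apply_ne {ι κ : Type*} [Fintype ι] [Countable κ] (y : κ → ℝ) :
    ∀ᵐ z : ι → ℝ, ∀ i l, z i ≠ y l :=
  ae_all_iff.2 fun i => ae_all_iff.2 fun l =>
    Measure.ae_eval_ne (fun _ : ι => (volume : Measure ℝ)) i (y l)

/-- The factor that a particle at `t` picks up from the pair `a, b` in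
`conj χᵃ(·, a) χᵃ(·, b)`. -/
noncomputable def pairPhase (κ a b t : ℝ) : ℂ :=
  Complex.exp (Complex.I * Real.pi * κ * ((Real.sign (t - b) - Real.sign (t - a) : ℝ) : ℂ) / 2) *
    (Real.sign (a - t) * Real.sign (b - t) : ℝ)

lemma conj_anyonic_append_mul_anyonic_append (κ : ℝ) {m n : ℕ} {z : Fin m → ℝ}
    (hz : Function.Injective z) (x x' : Fin n → ℝ) (c c' : ℂ) :
    starRingEnd ℂ (Afac κ (Fin.append z x') * (Bfac (Fin.append z x') : ℂ) * c') *
        (Afac κ (Fin.append z x) * (Bfac (Fin.append z x) : ℂ) * c)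
      = Afac (-κ) x' * (Bfac x' : ℂ) * (Afac κ x * (Bfac x : ℂ)) *
          (∏ i, ∏ l, pairPhase κ (x' l) (x l) (z i)) * (starRingEnd ℂ c' * c) := by
  calc _ = (starRingEnd ℂ (Afac κ (Fin.append z x')) * Afac κ (Fin.append z x)) *
        ((Bfac (Fin.append z x') * Bfac (Fin.append z x) : ℝ) : ℂ) * (starRingEnd ℂ c' * c) := by
        simp only [map_mul, Complex.conj_ofReal, Complex.ofReal_mul]
        ring
    _ = _ := by
        rw [conj_Afac_append_mul_Afac_append, Bfac_append_mul_Bfac_append hz]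
        push_cast [pairPhase]
        simp only [Finset.prod_mul_distrib]
        ring

lemma pairPhase_of_lt_of_lt (κ : ℝ) {a b t : ℝ} (ha : t < a) (hb : t < b) :
    pairPhase κ a b t = 1 := by
  simp [pairPhase, Real.sign_of_neg (sub_neg.2 ha), Real.sign_of_neg (sub_neg.2 hb),
    Real.sign_of_pos (sub_pos.2 ha), Real.sign_of_pos (sub_pos.2 hb)]

lemma pairPhase_of_gt_of_gt (κ : ℝ) {a b t : ℝ} (ha : a < t) (hb : b < t) :
    pairPhase κ a b t = 1 := by
  simp [pairPhase, Real.sign_of_neg (sub_neg.2 ha), Real.sign_of_neg (sub_neg.2 hb),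
    Real.sign_of_pos (sub_pos.2 ha), Real.sign_of_pos (sub_pos.2 hb)]

lemma pairPhase_of_mem_Ioo (κ : ℝ) {a b t : ℝ} (ht : t ∈ Set.Ioo a b) :
    pairPhase κ a b t = -Complex.exp (-(Complex.I * Real.pi * κ)) := by
  obtain ⟨ha, hb⟩ := ht
  simp only [pairPhase, Real.sign_of_neg (sub_neg.2 ha), Real.sign_of_neg (sub_neg.2 hb),
    Real.sign_of_pos (sub_pos.2 ha), Real.sign_of_pos (sub_pos.2 hb)]
  push_cast
  ring_nf

lemma prod_pairPhase_eq_one_add_indicator (κ : ℝ) {n : ℕ} {x x' : Fin n → ℝ}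
    (hx'x : ∀ l, x' l < x l) (hchain : ∀ j l : Fin n, j < l → x j < x' l) {t : ℝ}
    (ht : ∀ l, t ≠ x l ∧ t ≠ x' l) :
    ∏ l, pairPhase κ (x' l) (x l) t
      = 1 + -(1 + Complex.exp (-(Complex.I * Real.pi * κ))) *
          (⋃ l, Set.Icc (x' l) (x l)).indicator 1 t := by
  by_cases hI : t ∈ ⋃ l, Set.Icc (x' l) (x l)
  · obtain ⟨k, hk₁, hk₂⟩ := Set.mem_iUnion.1 hI
    replace hk₁ := hk₁.lt_of_ne' (ht k).2
    replace hk₂ := hk₂.lt_of_ne (ht k).1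
    rw [Set.indicator_of_mem hI, Pi.one_apply, Finset.prod_eq_single k,
      pairPhase_of_mem_Ioo κ ⟨hk₁, hk₂⟩]
    · ring
    · intro l _ hlk
      rcases hlk.lt_or_gt with hl | hl
      · have := hchain l k hl
        exact pairPhase_of_gt_of_gt κ (by linarith [hx'x l]) (by linarith)
      · have := hchain k l hl
        exact pairPhase_of_lt_of_lt κ (by linarith) (by linarith [hx'x l])
    · simp
  · rw [Set.indicator_of_notMem hI, mul_zero, add_zero]
    refine Finset.prod_eq_one fun l _ => ?_
    have hl : ¬(x' l ≤ t ∧ t ≤ x l) := fun h => hI (Set.mem_iUnion.2 ⟨l, h⟩)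
    rcases not_and_or.1 hl with h | h <;> rw [not_le] at h
    · exact pairPhase_of_lt_of_lt κ h (h.trans (hx'x l))
    · exact pairPhase_of_gt_of_gt κ ((hx'x l).trans h) h

lemma ae_conj_anyonic_mul_anyonic_eq (κ : ℝ) {m n : ℕ} {x x' : Fin n → ℝ}
    (hx'x : ∀ l, x' l < x l) (hchain : ∀ j l : Fin n, j < l → x j < x' l)
    (χ : (Fin (m + n) → ℝ) → ℂ) :
    ∀ᵐ z : Fin m → ℝ,
      starRingEnd ℂ (Afac κ (Fin.append z x') * (Bfac (Fin.append z x') : ℂ) *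
          χ (Fin.append z x')) *
        (Afac κ (Fin.append z x) * (Bfac (Fin.append z x) : ℂ) * χ (Fin.append z x))
      = (Afac (-κ) x' * (Bfac x' : ℂ) * (Afac κ x * (Bfac x : ℂ))) *
          ((∏ i, (1 + -(1 + Complex.exp (-(Complex.I * Real.pi * κ))) *
              (⋃ l, Set.Icc (x' l) (x l)).indicator 1 (z i))) *
            (starRingEnd ℂ (χ (Fin.append z x')) * χ (Fin.append z x))) := by
  filter_upwards [ae_injective, ae_forall_apply_ne x, ae_forall_apply_ne x'] with z hz hzx hzx'
  rw [conj_anyonic_append_mul_anyonic_append κ hz, mul_assoc]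
  congr 2
  exact Finset.prod_congr rfl fun i _ =>
    prod_pairPhase_eq_one_add_indicator κ hx'x hchain fun l => ⟨hzx i l, hzx' i l⟩

lemma conj_mul_comp_perm {ι : Type*} [Fintype ι] [DecidableEq ι] {α : Type*}
    {χ : (ι → α) → ℂ}
    (hanti : ∀ (π : Equiv.Perm ι) (w : ι → α), χ (w ∘ π) = ((Equiv.Perm.sign π : ℤ) : ℂ) * χ w)
    (π : Equiv.Perm ι) (w w' : ι → α) :
    starRingEnd ℂ (χ (w ∘ π)) * χ (w' ∘ π) = starRingEnd ℂ (χ w) * χ w' := by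
  have hsign : ((Equiv.Perm.sign π : ℤ) : ℂ) * ((Equiv.Perm.sign π : ℤ) : ℂ) = 1 := by
    rw [← Int.cast_mul, ← Units.val_mul, Int.units_mul_self, Units.val_one, Int.cast_one]
  rw [hanti, hanti, map_mul, map_intCast]
  linear_combination (starRingEnd ℂ (χ w) * χ w') * hsign

lemma Fin.append_comp_perm {α : Type*} {m n : ℕ} (z : Fin m → α) (y : Fin n → α)
    (τ : Equiv.Perm (Fin m)) :
    Fin.append (z ∘ τ) y
      = Fin.append z y ∘ finSumFinEquiv.permCongr (τ.sumCongr (Equiv.refl (Fin n))) := by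
  funext w
  refine Fin.addCases (fun i => ?_) (fun l => ?_) w <;> simp [Equiv.permCongr_apply]

lemma setIntegral_univ_pi_comp_perm_s12 {ι α E : Type*} [Fintype ι] [DecidableEq ι]
    [MeasurableSpace α] (μ : Measure α) [SigmaFinite μ] [NormedAddCommGroup E] [NormedSpace ℝ E]
    {F : (ι → α) → E} (hF : ∀ (σ : Equiv.Perm ι) z, F (z ∘ σ) = F z)
    (t : ι → Set α) (σ : Equiv.Perm ι) :
    ∫ z in Set.univ.pi (t ∘ σ), F z ∂(Measure.pi fun _ => μ)
      = ∫ z in Set.univ.pi t, F z ∂(Measure.pi fun _ => μ) := by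
  have he : ∀ z, MeasurableEquiv.piCongrLeft (fun _ : ι => α) σ z = z ∘ σ.symm :=
    fun z => funext fun i => by
      simpa using MeasurableEquiv.piCongrLeft_apply_apply (β := fun _ => α) σ z (σ.symm i)
  have hpre : MeasurableEquiv.piCongrLeft (fun _ : ι => α) σ ⁻¹' Set.univ.pi t
      = Set.univ.pi (t ∘ σ) := by
    ext z
    simp only [Set.mem_preimage, he, Set.mem_univ_pi, Function.comp_apply]
    exact ⟨fun h i => by simpa using h (σ i), fun h i => by simpa using h (σ.symm i)⟩
  rw [← (measurePreserving_piCongrLeft (fun _ => μ) σ).setIntegral_preimage_emb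
    (MeasurableEquiv.measurableEmbedding _) F (Set.univ.pi t), hpre]
  simp only [he, hF]

lemma setIntegral_univ_pi_ite_mem {α E : Type*} [MeasurableSpace α] (μ : Measure α)
    [SigmaFinite μ] [NormedAddCommGroup E] [NormedSpace ℝ E] {m : ℕ} {F : (Fin m → α) → E}
    (hF : ∀ (σ : Equiv.Perm (Fin m)) z, F (z ∘ σ) = F z) (I V : Set α) (S : Finset (Fin m)) :
    ∫ z in Set.univ.pi (fun i => if i ∈ S then I else V), F z ∂(Measure.pi fun _ => μ)
      = ∫ z in Set.univ.pi (fun i : Fin m => if (i : ℕ) < S.card then I else V), F z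
          ∂(Measure.pi fun _ => μ) := by
  have hcard : (Finset.univ.filter fun i : Fin m => (i : ℕ) < S.card).card = S.card := by
    rw [Fin.card_filter_val_lt, min_eq_right (by simpa using S.card_le_univ)]
  obtain ⟨σ, hσ⟩ := Equiv.Perm.exists_map_finset_eq _ _ hcard
  have hmem : ∀ i, σ i ∈ S ↔ (i : ℕ) < S.card := fun i => by
    simpa [hσ] using Finset.mem_map' σ.toEmbedding (a := i)
      (s := Finset.univ.filter fun i : Fin m => (i : ℕ) < S.card)
  rw [← setIntegral_univ_pi_comp_perm_s12 μ hF _ σ]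
  simp only [Function.comp_def, hmem]

lemma prod_indicator_one_mul {ι α R : Type*} [CommSemiring R] (S : Finset ι) (I : Set α)
    (F : (ι → α) → R) (z : ι → α) :
    (∏ i ∈ S, I.indicator 1 (z i)) * F z = (Set.pi S fun _ => I).indicator F z := by
  classical
  simp only [Set.indicator_apply, Pi.one_apply, Finset.prod_boole, Set.mem_pi,
    Finset.mem_coe, ite_mul, one_mul, zero_mul]

lemma setIntegral_prod_one_add_indicator_mul {α 𝕜 : Type*} [MeasurableSpace α]
    (μ : Measure α) [SigmaFinite μ] [RCLike 𝕜] {m : ℕ} {F : (Fin m → α) → 𝕜}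
    (hF : ∀ (σ : Equiv.Perm (Fin m)) z, F (z ∘ σ) = F z) {I V : Set α} (hI : MeasurableSet I)
    (hIV : I ⊆ V) (hFV : IntegrableOn F (Set.univ.pi fun _ => V) (Measure.pi fun _ => μ))
    (a : 𝕜) :
    ∫ z in Set.univ.pi (fun _ => V), (∏ i, (1 + a * I.indicator 1 (z i))) * F z
        ∂(Measure.pi fun _ => μ)
      = ∑ j ∈ Finset.range (m + 1), (m.choose j : 𝕜) * a ^ j *
          ∫ z in Set.univ.pi (fun i : Fin m => if (i : ℕ) < j then I else V), F z
            ∂(Measure.pi fun _ => μ) := by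
  classical
  have hpi : ∀ S : Finset (Fin m), MeasurableSet (Set.pi (S : Set (Fin m)) fun _ => I) :=
    fun S => MeasurableSet.pi S.countable_toSet fun _ _ => hI
  have hbox : ∀ S : Finset (Fin m),
      (Set.univ.pi fun _ => V) ∩ Set.pi (S : Set (Fin m)) (fun _ => I)
        = Set.univ.pi fun i => if i ∈ S then I else V := fun S => by
    ext z
    simp only [Set.mem_inter_iff, Set.mem_pi, Finset.mem_coe, Set.mem_univ, true_implies]
    refine ⟨fun h i => ?_, fun h => ⟨fun i => ?_, fun i hi => ?_⟩⟩
    · split_ifs with hi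
      exacts [h.2 i hi, h.1 i]
    · by_cases hi : i ∈ S
      · exact hIV (by simpa [hi] using h i)
      · simpa [hi] using h i
    · simpa [hi] using h i
  have hterm : ∀ S : Finset (Fin m),
      ∫ z in Set.univ.pi (fun _ => V), a ^ S.card * ((∏ i ∈ S, I.indicator 1 (z i)) * F z)
          ∂(Measure.pi fun _ => μ)
        = a ^ S.card * ∫ z in Set.univ.pi (fun i : Fin m => if (i : ℕ) < S.card then I else V),
            F z ∂(Measure.pi fun _ => μ) := fun S => by
    simp only [prod_indicator_one_mul, integral_const_mul, setIntegral_indicator (hpi S), hbox,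
      setIntegral_univ_pi_ite_mem μ hF]
  have hint : ∀ S : Finset (Fin m), IntegrableOn
      (fun z => a ^ S.card * ((∏ i ∈ S, I.indicator 1 (z i)) * F z))
      (Set.univ.pi fun _ => V) (Measure.pi fun _ => μ) := fun S => by
    simp only [prod_indicator_one_mul]
    exact (hFV.indicator (hpi S)).const_mul _
  simp only [Finset.prod_one_add, ← Finset.pow_card_mul_prod, Finset.sum_mul, mul_assoc]
  rw [integral_finsetSum _ fun S _ => hint S]
  simp only [hterm]
  rw [Finset.sum_powerset_apply_card (fun j => a ^ j * ∫ z in Set.univ.pi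
    (fun i : Fin m => if (i : ℕ) < j then I else V), F z ∂(Measure.pi fun _ => μ))]
  simp [nsmul_eq_mul]

theorem anyon_fermi_rdm_minus_general (κ L : ℝ) (m n : ℕ)
    (χ : (Fin (m + n) → ℝ) → ℂ) (hcont : Continuous χ)
    (hanti : ∀ (π : Equiv.Perm (Fin (m + n))) (z : Fin (m + n) → ℝ),
      χ (z ∘ π) = ((Equiv.Perm.sign π : ℤ) : ℂ) * χ z)
    (x x' : Fin n → ℝ)
    (hxV : ∀ j, x j ∈ Set.Icc (-(L / 2)) (L / 2))
    (hx'V : ∀ j, x' j ∈ Set.Icc (-(L / 2)) (L / 2))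
    (hx'x : ∀ j, x' j < x j) (hchain : ∀ j k : Fin n, j < k → x j < x' k) :
    (∫ z in Set.univ.pi (fun _ : Fin m => Set.Icc (-(L / 2)) (L / 2)),
        (starRingEnd ℂ) (Afac κ (Fin.append z x') * (Bfac (Fin.append z x') : ℂ) *
            χ (Fin.append z x')) *
          (Afac κ (Fin.append z x) * (Bfac (Fin.append z x) : ℂ) * χ (Fin.append z x)))
      = (Afac (-κ) x' * (Bfac x' : ℂ) * (Afac κ x * (Bfac x : ℂ))) *
          ∑ j ∈ Finset.range (m + 1),
            (-1) ^ j * (1 + Complex.exp (-(Complex.I * Real.pi * κ))) ^ j * (m.choose j : ℂ) *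
              ∫ z in Set.univ.pi (fun i : Fin m =>
                  if (i : ℕ) < j then ⋃ l, Set.Icc (x' l) (x l)
                  else Set.Icc (-(L / 2)) (L / 2)),
                (starRingEnd ℂ) (χ (Fin.append z x')) * χ (Fin.append z x) := by
  set I := ⋃ l, Set.Icc (x' l) (x l)
  set F : (Fin m → ℝ) → ℂ := fun z => starRingEnd ℂ (χ (Fin.append z x')) * χ (Fin.append z x)
  have hF : ∀ (σ : Equiv.Perm (Fin m)) z, F (z ∘ σ) = F z := fun σ z => by
    simp only [F, Fin.append_comp_perm, conj_mul_comp_perm hanti]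
  have hcont_append : ∀ y : Fin n → ℝ, Continuous fun z : Fin m → ℝ => Fin.append z y :=
    fun y => (Fin.continuous_append m n).comp (continuous_id.prodMk continuous_const)
  have hFint : IntegrableOn F (Set.univ.pi fun _ => Set.Icc (-(L / 2)) (L / 2)) :=
    ((Complex.continuous_conj.comp (hcont.comp (hcont_append x'))).mul
      (hcont.comp (hcont_append x))).continuousOn.integrableOn_compact
      (isCompact_univ_pi fun _ => isCompact_Icc)
  have hIV : I ⊆ Set.Icc (-(L / 2)) (L / 2) :=
    Set.iUnion_subset fun l => Set.Icc_subset_Icc (hx'V l).1 (hxV l).2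
  have hI : MeasurableSet I := MeasurableSet.iUnion fun _ => measurableSet_Icc
  rw [integral_congr_ae (ae_restrict_of_ae (ae_conj_anyonic_mul_anyonic_eq κ hx'x hchain χ)),
    integral_const_mul, volume_pi,
    setIntegral_prod_one_add_indicator_mul volume hF hI hIV hFint]
  congr 1
  refine Finset.sum_congr rfl fun j _ => ?_
  rw [neg_pow]
  ring

/-- Anyon–Fermi expansion of the `n`-particle reduced density matrix, ordering `O₋`
(`x₁' < x₁ < ⋯ < xₙ' < xₙ`, `I₋ = ⋃ₗ [xₗ', xₗ]`), with `N = m + n` particles on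
`V = [-L/2, L/2]` and `χᵃ = A_κ B χ` for a continuous totally antisymmetric `χ`. -/
theorem anyon_fermi_rdm_minus (κ L : ℝ) (hL : 0 < L) (m n : ℕ) (hn : 1 ≤ n)
    (χ : (Fin (m + n) → ℝ) → ℂ) (hcont : Continuous χ)
    (hanti : ∀ (π : Equiv.Perm (Fin (m + n))) (z : Fin (m + n) → ℝ),
      χ (z ∘ π) = ((Equiv.Perm.sign π : ℤ) : ℂ) * χ z)
    (x x' : Fin n → ℝ)
    (hxV : ∀ j, x j ∈ Set.Icc (-(L / 2)) (L / 2))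
    (hx'V : ∀ j, x' j ∈ Set.Icc (-(L / 2)) (L / 2))
    (hx'x : ∀ j, x' j < x j) (hchain : ∀ j k : Fin n, j < k → x j < x' k) :
    (∫ z in Set.univ.pi (fun _ : Fin m => Set.Icc (-(L / 2)) (L / 2)),
        (starRingEnd ℂ) (Afac κ (Fin.append z x') * (Bfac (Fin.append z x') : ℂ) *
            χ (Fin.append z x')) *
          (Afac κ (Fin.append z x) * (Bfac (Fin.append z x) : ℂ) * χ (Fin.append z x)))
      = (Afac (-κ) x' * (Bfac x' : ℂ) * (Afac κ x * (Bfac x : ℂ))) *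
          ∑ j ∈ Finset.range (m + 1),
            (-1) ^ j * (1 + Complex.exp (-(Complex.I * Real.pi * κ))) ^ j * (m.choose j : ℂ) *
              ∫ z in Set.univ.pi (fun i : Fin m =>
                  if (i : ℕ) < j then ⋃ l, Set.Icc (x' l) (x l)
                  else Set.Icc (-(L / 2)) (L / 2)),
                (starRingEnd ℂ) (χ (Fin.append z x')) * χ (Fin.append z x) :=
  anyon_fermi_rdm_minus_general κ L m n χ hcont hanti x x' hxV hx'V hx'x hchain
end

section
/- (Andréief integration identity.) Let $(X,\mu)$ be a measure space, $V \subseteq X$ measurable, and let $f_1,\dots,f_N, g_1,\dots,g_N : X \to \mathbb{C}$ be measurable functions such that each product $f_i \overline{g_j}$ is integrable over $V$. Then $\int_{V^N} \det\big[f_i(z_j)\big]_{1\le i,j \le N}\; \overline{\det\big[g_i(z_j)\big]_{1\le i,j \le N}}\; d\mu^N(z_1,\dots,z_N) = N!\, \det\Big[\int_V f_i(z)\, \overline{g_j(z)}\, d\mu(z)\Big]_{1\le i,j\le N}$. -/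
open MeasureTheory Finset Equiv Matrix
open scoped Nat ComplexConjugate

/-!
Expanding both determinants by the Leibniz formula writes the integrand as a double sum over
permutations `σ, τ` of `sign σ sign τ ∏ⱼ fσⱼ(zⱼ) conj gτⱼ(zⱼ)`, and Fubini turns the integral of
each product into `∏ⱼ Aσⱼτⱼ` with `A` the Gram matrix `∫ fᵢ conj gⱼ`. For fixed `τ` the
substitution `σ ↦ στ` turns the sum over `σ` into the Leibniz expansion of `det A`, so each of the
`N!` values of `τ` contributes `det A`.
-/

namespace Matrix

variable {n R : Type*} [Fintype n] [DecidableEq n] [CommRing R]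

theorem det_mul_star_det_eq_sum_perm_sum_perm [StarRing R] (M M' : Matrix n n R) :
    M.det * star M'.det =
      ∑ σ : Perm n, ∑ τ : Perm n,
        (((Perm.sign σ * Perm.sign τ : ℤˣ) : ℤ) : R) * ∏ j, M (σ j) j * star (M' (τ j) j) := by
  rw [det_apply', det_apply', star_sum, sum_mul_sum]
  refine sum_congr rfl fun σ _ => sum_congr rfl fun τ _ => ?_
  rw [star_mul', star_intCast, star_prod, prod_mul_distrib, Units.val_mul, Int.cast_mul]
  ring

theorem sum_perm_sum_perm_sign_mul_prod (A : Matrix n n R) :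
    ∑ σ : Perm n, ∑ τ : Perm n,
        (((Perm.sign σ * Perm.sign τ : ℤˣ) : ℤ) : R) * ∏ j, A (σ j) (τ j) =
      (Fintype.card n)! * A.det := by
  have inner (τ : Perm n) :
      ∑ σ : Perm n, (((Perm.sign σ * Perm.sign τ : ℤˣ) : ℤ) : R) * ∏ j, A (σ j) (τ j) =
        A.det := by
    rw [det_apply', ← Equiv.sum_comp (Equiv.mulRight τ)]
    refine sum_congr rfl fun ρ _ => ?_
    rw [coe_mulRight, Perm.sign_mul, mul_assoc, Int.units_mul_self, mul_one]
    exact congrArg _ (Equiv.prod_comp τ fun k => A (ρ k) k)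
  rw [sum_comm, sum_congr rfl fun τ _ => inner τ, sum_const, card_univ, Fintype.card_perm,
    nsmul_eq_mul]

end Matrix

theorem integral_pi_det_mul_conj_det {ι X 𝕜 : Type*} [Fintype ι] [DecidableEq ι] [RCLike 𝕜]
    [MeasurableSpace X] (μ : Measure X) [SigmaFinite μ] (f g : ι → X → 𝕜)
    (hint : ∀ i j, Integrable (fun x => f i x * conj (g j x)) μ) :
    ∫ z, (of fun i j => f i (z j)).det * conj (of fun i j => g i (z j)).det
        ∂(Measure.pi fun _ => μ) =
      (Fintype.card ι)! * (of fun i j => ∫ x, f i x * conj (g j x) ∂μ).det := by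
  have hprod (σ τ : Perm ι) :
      Integrable (fun z : ι → X => ∏ j, f (σ j) (z j) * conj (g (τ j) (z j)))
        (Measure.pi fun _ => μ) :=
    Integrable.fintype_prod fun j => hint (σ j) (τ j)
  calc _ = ∫ z, ∑ σ : Perm ι, ∑ τ : Perm ι,
          (((Perm.sign σ * Perm.sign τ : ℤˣ) : ℤ) : 𝕜) * ∏ j, f (σ j) (z j) * conj (g (τ j) (z j))
          ∂(Measure.pi fun _ => μ) := by
        simp_rw [starRingEnd_apply, det_mul_star_det_eq_sum_perm_sum_perm, of_apply]
    _ = ∑ σ : Perm ι, ∑ τ : Perm ι,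
          (((Perm.sign σ * Perm.sign τ : ℤˣ) : ℤ) : 𝕜) *
            ∏ j, ∫ x, f (σ j) x * conj (g (τ j) x) ∂μ := by
        have hterm (σ τ : Perm ι) :=
          (hprod σ τ).const_mul (((Perm.sign σ * Perm.sign τ : ℤˣ) : ℤ) : 𝕜)
        rw [integral_finsetSum _ fun σ _ => integrable_finsetSum _ fun τ _ => hterm σ τ]
        refine sum_congr rfl fun σ _ => ?_
        rw [integral_finsetSum _ fun τ _ => hterm σ τ]
        refine sum_congr rfl fun τ _ => ?_
        rw [integral_const_mul,
          integral_fintype_prod_eq_prod fun j x => f (σ j) x * conj (g (τ j) x)]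
    _ = _ := sum_perm_sum_perm_sign_mul_prod (of fun i j => ∫ x, f i x * conj (g j x) ∂μ)

theorem andreief_identity_general {X : Type*} [MeasurableSpace X] (μ : Measure X) [SigmaFinite μ]
    (V : Set X) (N : ℕ) (f g : Fin N → X → ℂ)
    (hint : ∀ i j, IntegrableOn (fun z => f i z * (starRingEnd ℂ) (g j z)) V μ) :
    ∫ z in Set.univ.pi (fun _ : Fin N => V),
        Matrix.det (Matrix.of fun i j => f i (z j)) *
          (starRingEnd ℂ) (Matrix.det (Matrix.of fun i j => g i (z j)))
        ∂(Measure.pi fun _ => μ)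
      = (N.factorial : ℂ) *
          Matrix.det (Matrix.of fun i j => ∫ z in V, f i z * (starRingEnd ℂ) (g j z) ∂μ) := by
  rw [Measure.restrict_pi_pi, integral_pi_det_mul_conj_det _ f g hint, Fintype.card_fin]

/-- Andréief integration identity:
`∫_{V^N} det[fᵢ(zⱼ)] conj(det[gᵢ(zⱼ)]) dμ^N = N! det[∫_V fᵢ(z) conj(gⱼ(z)) dμ]`. -/
theorem andreief_identity {X : Type*} [MeasurableSpace X] (μ : Measure X) [SigmaFinite μ]
    (V : Set X) (hV : MeasurableSet V) (N : ℕ) (f g : Fin N → X → ℂ)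
    (hf : ∀ i, Measurable (f i)) (hg : ∀ i, Measurable (g i))
    (hint : ∀ i j, IntegrableOn (fun z => f i z * (starRingEnd ℂ) (g j z)) V μ) :
    ∫ z in Set.univ.pi (fun _ : Fin N => V),
        Matrix.det (Matrix.of fun i j => f i (z j)) *
          (starRingEnd ℂ) (Matrix.det (Matrix.of fun i j => g i (z j)))
        ∂(Measure.pi fun _ => μ)
      = (N.factorial : ℂ) *
          Matrix.det (Matrix.of fun i j => ∫ z in V, f i z * (starRingEnd ℂ) (g j z) ∂μ) :=
  andreief_identity_general μ V N f g hint
end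

section
/- Let $(X,\mu)$ be a measure space, $V \subseteq X$ measurable, $\Lambda$ a finite index set, and let $u_\lambda : X \to \mathbb{C}$ ($\lambda \in \Lambda$) be an orthonormal family in $L^2(V,\mu)$, i.e. $\int_V \overline{u_\lambda(z)}\, u_{\lambda'}(z)\, d\mu(z) = \delta_{\lambda \lambda'}$. Given real weights $w_\lambda$, define the kernel $F(x,y) = \sum_{\lambda \in \Lambda} w_\lambda\, \overline{u_\lambda(x)}\, u_\lambda(y)$. Then for every $N \le |\Lambda|$: $\frac{1}{N!}\int_{V^N} \det\big[F(z_i, z_j)\big]_{1\le i,j \le N}\, d\mu^N(z_1,\dots,z_N) = e_N(w)$, where $e_N(w) = \sum_{S \subseteq \Lambda,\ |S|=N} \prod_{\lambda \in S} w_\lambda$ is the $N$-th elementary symmetric polynomial of the weights. -/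
/-!
Expanding every row of the kernel matrix by multilinearity writes `det [F(zᵢ, zⱼ)]` as a sum,
over all maps `g : Fin N → Λ`, of `∏ᵢ w_{g i}` times a determinant whose `j`-th column depends
on `z_j` alone. Integrating such a determinant factor by factor in each Leibniz term gives the
Gram determinant `det [⟨u_{g j}, u_{g i}⟩] = det [δ_{g i, g j}]` (Andréief's identity), which is
`1` for injective `g` and `0` otherwise. Every `N`-subset of `Λ` is the image of exactly `N!`
injective maps, so the sum is `N! e_N(w)`.
-/

open MeasureTheory Matrix Finset

namespace Matrix

variable {n Λ R : Type*} [Fintype n] [DecidableEq n] [CommRing R]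

theorem det_of_sum_mul_mul [Fintype Λ] (c : Λ → R) (a b : Λ → n → R) :
    det (of fun i j => ∑ l, c l * a l i * b l j)
      = ∑ g : n → Λ, (∏ i, c (g i)) * det (of fun i j => b (g i) j * a (g j) j) := by
  have rows : (of fun i j => ∑ l, c l * a l i * b l j) = fun i => ∑ l, (c l * a l i) • b l := by
    ext i j; simp [mul_assoc]
  rw [rows]
  refine ((detRowAlternating (n := n) (R := R)).toMultilinearMap.map_sum
    fun i l => (c l * a l i) • b l).trans (sum_congr rfl fun g _ => ?_)
  calc det (of fun i j => c (g i) * a (g i) i * b (g i) j)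
      = (∏ i, c (g i) * a (g i) i) * det (of fun i j => b (g i) j) := det_mul_column _ _
    _ = (∏ i, c (g i)) * det (of fun i j => a (g j) j * b (g i) j) := by
      rw [prod_mul_distrib, mul_assoc, ← det_mul_row]; rfl
    _ = _ := by simp only [mul_comm (a _ _)]

theorem det_of_ite_apply_eq_apply {Λ : Type*} [DecidableEq Λ] (g : n → Λ) :
    det (of fun i j => if g i = g j then (1 : R) else 0)
      = if Function.Injective g then 1 else 0 := by
  split_ifs with hg
  · convert det_one (n := n) (R := R)
    ext i j
    simp [one_apply, hg.eq_iff]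
  · obtain ⟨i, j, hij, hne⟩ := Function.not_injective_iff.mp hg
    exact det_zero_of_row_eq hne (funext fun k => by simp [hij])

end Matrix

section Combinatorics

variable {ι Λ : Type*} [Fintype ι] [DecidableEq ι] [Fintype Λ] [DecidableEq Λ]

theorem card_filter_injective_image_eq {S : Finset Λ} (hS : #S = Fintype.card ι) :
    #{g : ι → Λ | Function.Injective g ∧ univ.image g = S} = (Fintype.card ι).factorial := by
  let fiberEquiv : {g : ι → Λ // Function.Injective g ∧ univ.image g = S} ≃ (ι ≃ S) :=
    { toFun := fun g => Equiv.ofBijective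
        (fun i => ⟨g.1 i, subset_of_eq g.2.2 (mem_image_of_mem g.1 (mem_univ i))⟩)
        ⟨fun i j h => g.2.1 (congrArg Subtype.val h), fun s => by
          obtain ⟨i, -, hi⟩ := mem_image.mp (subset_of_eq g.2.2.symm s.2)
          exact ⟨i, Subtype.ext hi⟩⟩
      invFun := fun e => ⟨fun i => e i, Subtype.val_injective.comp e.injective, by
        ext l
        simp only [mem_image, mem_univ, true_and]
        exact ⟨fun ⟨i, hi⟩ => hi ▸ (e i).2, fun hl => ⟨e.symm ⟨l, hl⟩, by simp⟩⟩⟩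
      left_inv := fun g => rfl
      right_inv := fun e => by ext; rfl }
  rw [← Fintype.card_subtype, Fintype.card_congr fiberEquiv,
    Fintype.card_equiv (Fintype.equivOfCardEq (by simp [hS]))]

variable {R : Type*} [CommSemiring R]

theorem sum_injective_prod_eq_factorial_mul_sum_powersetCard (v : Λ → R) :
    ∑ g : ι → Λ with Function.Injective g, ∏ i, v (g i)
      = (Fintype.card ι).factorial * ∑ S ∈ univ.powersetCard (Fintype.card ι), ∏ l ∈ S, v l := by
  have image_mem : ∀ g ∈ ({g : ι → Λ | Function.Injective g} : Finset _),
      univ.image g ∈ univ.powersetCard (Fintype.card ι) := fun g hg => by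
    rw [mem_powersetCard_univ, card_image_of_injective _ (mem_filter.mp hg).2, card_univ]
  rw [← sum_fiberwise_of_maps_to image_mem, mul_sum]
  refine sum_congr rfl fun S hS => ?_
  calc ∑ g ∈ {g : ι → Λ | Function.Injective g} with univ.image g = S, ∏ i, v (g i)
      = ∑ g ∈ {g : ι → Λ | Function.Injective g ∧ univ.image g = S}, ∏ l ∈ S, v l := by
        rw [filter_filter]
        refine sum_congr rfl fun g hg => ?_
        obtain ⟨hinj, rfl⟩ := (mem_filter.mp hg).2
        exact (prod_image fun i _ j _ h => hinj h).symm
    _ = (Fintype.card ι).factorial * ∏ l ∈ S, v l := by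
        rw [sum_const, card_filter_injective_image_eq (mem_powersetCard_univ.mp hS), nsmul_eq_mul]

end Combinatorics

section Integral

variable {ι X 𝕜 : Type*} [Fintype ι] [DecidableEq ι] [MeasurableSpace X] [RCLike 𝕜]
  {ν : Measure X} [SigmaFinite ν]

theorem integrable_det_of_column {f : ι → ι → X → 𝕜} (hf : ∀ i j, Integrable (f i j) ν) :
    Integrable (fun z => det (of fun i j => f i j (z j))) (Measure.pi fun _ => ν) := by
  simp only [det_apply', of_apply]
  exact integrable_finsetSum _ fun σ _ =>
    (Integrable.fintype_prod fun i => hf (σ i) i).const_mul _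

theorem integral_det_of_column {f : ι → ι → X → 𝕜} (hf : ∀ i j, Integrable (f i j) ν) :
    ∫ z, det (of fun i j => f i j (z j)) ∂(Measure.pi fun _ => ν)
      = det (of fun i j => ∫ x, f i j x ∂ν) := by
  simp only [det_apply', of_apply]
  rw [integral_finsetSum _ fun σ _ => (Integrable.fintype_prod fun i => hf (σ i) i).const_mul _]
  refine sum_congr rfl fun σ _ => ?_
  rw [integral_const_mul, integral_fintype_prod_eq_prod (fun i x => f (σ i) i x)]

theorem integral_det_of_sum_mul_mul {Λ : Type*} [Fintype Λ] (c : Λ → 𝕜) (a b : Λ → X → 𝕜)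
    (hba : ∀ l l', Integrable (fun x => b l x * a l' x) ν) :
    ∫ z, det (of fun i j => ∑ l, c l * a l (z i) * b l (z j)) ∂(Measure.pi fun _ : ι => ν)
      = ∑ g : ι → Λ, (∏ i, c (g i)) * det (of fun i j => ∫ x, b (g i) x * a (g j) x ∂ν) := by
  have expand : ∀ z : ι → X, det (of fun i j => ∑ l, c l * a l (z i) * b l (z j))
      = ∑ g : ι → Λ, (∏ i, c (g i)) * det (of fun i j => b (g i) (z j) * a (g j) (z j)) :=
    fun z => det_of_sum_mul_mul c (fun l i => a l (z i)) (fun l j => b l (z j))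
  simp_rw [expand]
  rw [integral_finsetSum _ fun g _ => (integrable_det_of_column fun i j => hba _ _).const_mul _]
  refine sum_congr rfl fun g _ => ?_
  rw [integral_const_mul, integral_det_of_column fun i j => hba _ _]

end Integral

theorem kernel_determinant_integral_general {X : Type*} [MeasurableSpace X] (μ : Measure X)
    [SigmaFinite μ] (V : Set X)
    {Λ : Type*} [Fintype Λ] [DecidableEq Λ] (u : Λ → X → ℂ) (w : Λ → ℝ)
    (hint : ∀ lam lam', IntegrableOn (fun z => u lam z * (starRingEnd ℂ) (u lam' z)) V μ)
    (horth : ∀ lam lam',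
      ∫ z in V, (starRingEnd ℂ) (u lam z) * u lam' z ∂μ = if lam = lam' then 1 else 0)
    (N : ℕ) :
    ((N.factorial : ℂ))⁻¹ *
        ∫ z in Set.univ.pi (fun _ : Fin N => V),
          Matrix.det (Matrix.of fun i j =>
            ∑ lam, (w lam : ℂ) * (starRingEnd ℂ) (u lam (z i)) * u lam (z j))
          ∂(Measure.pi fun _ => μ)
      = ∑ S ∈ Finset.univ.powersetCard N, ∏ lam ∈ S, (w lam : ℂ) := by
  have gram : ∀ l l', ∫ x in V, u l x * (starRingEnd ℂ) (u l' x) ∂μ = if l = l' then 1 else 0 :=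
    fun l l' => by simp_rw [mul_comm (u l _), horth, eq_comm]
  have andreief := integral_det_of_sum_mul_mul (ι := Fin N) (fun l => (w l : ℂ))
    (fun l x => (starRingEnd ℂ) (u l x)) u hint
  rw [Measure.restrict_pi_pi, andreief]
  simp_rw [gram, det_of_ite_apply_eq_apply, mul_ite, mul_one, mul_zero]
  rw [← sum_filter, sum_injective_prod_eq_factorial_mul_sum_powersetCard fun l => (w l : ℂ),
    Fintype.card_fin, inv_mul_cancel_left₀ (by exact_mod_cast N.factorial_ne_zero)]

/-- For an orthonormal family `u_λ` in `L²(V,μ)` and real weights `w_λ`, with kernel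
`F(x,y) = ∑_λ w_λ conj(u_λ(x)) u_λ(y)`, one has
`(1/N!) ∫_{V^N} det[F(zᵢ,zⱼ)] dμ^N = e_N(w)`, the `N`-th elementary symmetric
polynomial of the weights. -/
theorem kernel_determinant_integral {X : Type*} [MeasurableSpace X] (μ : Measure X)
    [SigmaFinite μ] (V : Set X) (hV : MeasurableSet V)
    {Λ : Type*} [Fintype Λ] [DecidableEq Λ] (u : Λ → X → ℂ) (w : Λ → ℝ)
    (hmeas : ∀ lam, Measurable (u lam))
    (hint : ∀ lam lam', IntegrableOn (fun z => u lam z * (starRingEnd ℂ) (u lam' z)) V μ)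
    (horth : ∀ lam lam',
      ∫ z in V, (starRingEnd ℂ) (u lam z) * u lam' z ∂μ = if lam = lam' then 1 else 0)
    (N : ℕ) (hN : N ≤ Fintype.card Λ) :
    ((N.factorial : ℂ))⁻¹ *
        ∫ z in Set.univ.pi (fun _ : Fin N => V),
          Matrix.det (Matrix.of fun i j =>
            ∑ lam, (w lam : ℂ) * (starRingEnd ℂ) (u lam (z i)) * u lam (z j))
          ∂(Measure.pi fun _ => μ)
      = ∑ S ∈ Finset.univ.powersetCard N, ∏ lam ∈ S, (w lam : ℂ) :=
  kernel_determinant_integral_general μ V u w hint horth N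
end
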